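/- arXiv:1205.4158 — 3 statements merged into one kernel-verified Lean document; each statement's English description precedes it below -/
import Mathlib

section
/- Let f be differentiable on I° with f' integrable on [a,b], |f'| strongly convex on [a,b] with modulus c > 0, |f'| ≤ M, and M ≥ c(b-a)²/24 on the midpoint case. Then |f((a+b)/2) - (1/(b-a))∫_a^b f(u) du| ≤ M(b-a)/4 - c(b-a)³/96. -/
open MeasureTheory intervalIntegral Set

def StronglyConvexOnWith (a b c : ℝ) (g : ℝ → ℝ) : Prop :=
  ∀ x ∈ Set.Icc a b, ∀ y ∈ Set.Icc a b, ∀ t ∈ Set.Ioo (0:ℝ) 1,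
    g (t * x + (1 - t) * y) ≤ t * g x + (1 - t) * g y - c * t * (1 - t) * (x - y) ^ 2

/-!
Strong convexity of `|f'|` together with `|f' a|, |f' b| ≤ M` gives the pointwise bound
`|f' u| ≤ M - c (b - u) (u - a)` on `[a, b]`. The Montgomery identity writes
`(b - a) f(m) - ∫ f` as the integral of `f'` against the Peano kernel `u - a` on `[a, m]`,
`u - b` on `[m, b]`; integrating the pointwise bound against that kernel gives
`M (b - a) / 4 - 5 c (b - a)³ / 96`. Since `f` need not be continuous at `a` and `b`, the
identity is applied to the Lipschitz extension of `f` from `(a, b)`, which has the same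
integral and midpoint value.
-/

theorem StronglyConvexOnWith.le_sub_mul {a b c M : ℝ} {g : ℝ → ℝ}
    (hg : StronglyConvexOnWith a b c g) (hab : a < b) (ha : g a ≤ M) (hb : g b ≤ M)
    {u : ℝ} (hu : u ∈ Icc a b) : g u ≤ M - c * ((b - u) * (u - a)) := by
  rcases hu.1.eq_or_lt with rfl | hau
  · simpa using ha
  rcases hu.2.eq_or_lt with rfl | hub
  · simpa using hb
  have hba : 0 < b - a := sub_pos.2 hab
  set t := (b - u) / (b - a) with ht_def
  have ht : t ∈ Ioo (0 : ℝ) 1 :=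
    ⟨div_pos (by linarith) hba, (div_lt_one hba).2 (by linarith)⟩
  have hu_eq : t * a + (1 - t) * b = u := by rw [ht_def]; field_simp; ring
  have hweight : t * (1 - t) * (a - b) ^ 2 = (b - u) * (u - a) := by rw [ht_def]; field_simp; ring
  have hconv := hg a (left_mem_Icc.2 hab.le) b (right_mem_Icc.2 hab.le) t ht
  rw [hu_eq, mul_assoc c, mul_assoc c, hweight] at hconv
  nlinarith [ht.1, ht.2]

theorem integral_sub_mul_deriv {g g' : ℝ → ℝ} {p q : ℝ} (k : ℝ)
    (hg : ContinuousOn g (uIcc p q))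
    (hderiv : ∀ x ∈ Ioo (min p q) (max p q), HasDerivAt g (g' x) x)
    (hg' : IntervalIntegrable g' volume p q) :
    ∫ x in p..q, (x - k) * g' x = (q - k) * g q - (p - k) * g p - ∫ x in p..q, g x := by
  simpa using integral_mul_deriv_eq_deriv_mul_of_hasDeriv_right (u := fun x => x - k)
    (u' := fun _ => 1) (by fun_prop) hg
    (fun x _ => ((hasDerivAt_id x).sub_const k).hasDerivWithinAt)
    (fun x hx => (hderiv x hx).hasDerivWithinAt) intervalIntegrable_const hg'

theorem montgomery_identity {g g' : ℝ → ℝ} {a b x : ℝ} (hx : x ∈ Icc a b)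
    (hg : ContinuousOn g (Icc a b)) (hderiv : ∀ y ∈ Ioo a b, HasDerivAt g (g' y) y)
    (hg' : IntervalIntegrable g' volume a b) :
    (b - a) * g x - ∫ u in a..b, g u =
      (∫ u in a..x, (u - a) * g' u) + ∫ u in x..b, (u - b) * g' u := by
  have hab : a ≤ b := hx.1.trans hx.2
  have hIcc : uIcc a b = Icc a b := uIcc_of_le hab
  have hax : uIcc a x ⊆ uIcc a b := uIcc_subset_uIcc_left (hIcc ▸ hx)
  have hxb : uIcc x b ⊆ uIcc a b := uIcc_subset_uIcc_right (hIcc ▸ hx)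
  rw [integral_sub_mul_deriv a (hg.mono (hIcc ▸ hax)) (fun y hy => hderiv y ?_)
      (hg'.mono_set hax),
    integral_sub_mul_deriv b (hg.mono (hIcc ▸ hxb)) (fun y hy => hderiv y ?_)
      (hg'.mono_set hxb),
    ← integral_add_adjacent_intervals (hg.intervalIntegrable_of_Icc hab |>.mono_set hax)
      (hg.intervalIntegrable_of_Icc hab |>.mono_set hxb)]
  · ring
  · rw [min_eq_left hx.2, max_eq_right hx.2] at hy
    exact ⟨hx.1.trans_lt hy.1, hy.2⟩
  · rw [min_eq_left hx.1, max_eq_right hx.1] at hy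
    exact ⟨hy.1, hy.2.trans_le hx.2⟩

theorem integral_left_peano_kernel_mul (a b c M : ℝ) :
    ∫ u in a..(a + b) / 2, (u - a) * (M - c * ((b - u) * (u - a))) =
      M * (b - a) ^ 2 / 8 - 5 * c * (b - a) ^ 4 / 192 := by
  have hF : ∀ u, HasDerivAt
      (fun u => M * (u - a) ^ 2 / 2 - c * ((b - a) * (u - a) ^ 3 / 3 - (u - a) ^ 4 / 4))
      ((u - a) * (M - c * ((b - u) * (u - a)))) u := by
    intro u
    have h := (hasDerivAt_id' u).sub_const a
    have hquad := ((h.pow 2).const_mul M).div_const 2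
    have hquart := ((((h.pow 3).const_mul (b - a)).div_const 3).sub
      ((h.pow 4).div_const 4)).const_mul c
    refine (hquad.sub hquart).congr_deriv ?_
    push_cast
    ring
  rw [integral_eq_sub_of_hasDerivAt (fun u _ => hF u)
    (Continuous.intervalIntegrable (by fun_prop) _ _)]
  ring

theorem integral_right_peano_kernel_mul (a b c M : ℝ) :
    ∫ u in (a + b) / 2..b, (b - u) * (M - c * ((b - u) * (u - a))) =
      M * (b - a) ^ 2 / 8 - 5 * c * (b - a) ^ 4 / 192 := by
  have hF : ∀ u, HasDerivAt
      (fun u => -(M * (b - u) ^ 2 / 2) + c * ((b - a) * (b - u) ^ 3 / 3 - (b - u) ^ 4 / 4))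
      ((b - u) * (M - c * ((b - u) * (u - a)))) u := by
    intro u
    have h := (hasDerivAt_id' u).const_sub b
    have hquad := ((h.pow 2).const_mul M).div_const 2
    have hquart := ((((h.pow 3).const_mul (b - a)).div_const 3).sub
      ((h.pow 4).div_const 4)).const_mul c
    refine (hquad.neg.add hquart).congr_deriv ?_
    push_cast
    ring
  rw [integral_eq_sub_of_hasDerivAt (fun u _ => hF u)
    (Continuous.intervalIntegrable (by fun_prop) _ _)]
  ring

theorem abs_midpoint_sub_average_le {g g' : ℝ → ℝ} {a b c M : ℝ} (hab : a < b)
    (hg : ContinuousOn g (Icc a b)) (hderiv : ∀ y ∈ Ioo a b, HasDerivAt g (g' y) y)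
    (hg' : IntervalIntegrable g' volume a b)
    (hbound : ∀ u ∈ Icc a b, |g' u| ≤ M - c * ((b - u) * (u - a))) :
    |g ((a + b) / 2) - (1 / (b - a)) * ∫ u in a..b, g u| ≤
      M * (b - a) / 4 - 5 * c * (b - a) ^ 3 / 96 := by
  have hba : 0 < b - a := sub_pos.2 hab
  have ham : a ≤ (a + b) / 2 := by linarith
  have hmb : (a + b) / 2 ≤ b := by linarith
  have hsplit := montgomery_identity ⟨ham, hmb⟩ hg hderiv hg'
  have hleft : |∫ u in a..(a + b) / 2, (u - a) * g' u| ≤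
      M * (b - a) ^ 2 / 8 - 5 * c * (b - a) ^ 4 / 192 := by
    rw [← Real.norm_eq_abs, ← integral_left_peano_kernel_mul]
    refine norm_integral_le_of_norm_le ham (ae_of_all _ fun u hu => ?_)
      (Continuous.intervalIntegrable (by fun_prop) _ _)
    rw [Real.norm_eq_abs, abs_mul, abs_of_nonneg (sub_nonneg.2 hu.1.le)]
    exact mul_le_mul_of_nonneg_left (hbound u ⟨hu.1.le, hu.2.trans hmb⟩) (sub_nonneg.2 hu.1.le)
  have hright : |∫ u in (a + b) / 2..b, (u - b) * g' u| ≤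
      M * (b - a) ^ 2 / 8 - 5 * c * (b - a) ^ 4 / 192 := by
    rw [← Real.norm_eq_abs, ← integral_right_peano_kernel_mul]
    refine norm_integral_le_of_norm_le hmb (ae_of_all _ fun u hu => ?_)
      (Continuous.intervalIntegrable (by fun_prop) _ _)
    rw [Real.norm_eq_abs, abs_mul, abs_sub_comm, abs_of_nonneg (sub_nonneg.2 hu.2)]
    exact mul_le_mul_of_nonneg_left (hbound u ⟨ham.trans hu.1.le, hu.2⟩) (sub_nonneg.2 hu.2)
  have hmid : g ((a + b) / 2) - (1 / (b - a)) * ∫ u in a..b, g u =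
      (1 / (b - a)) * ((b - a) * g ((a + b) / 2) - ∫ u in a..b, g u) := by
    field_simp
  rw [hmid, hsplit, abs_mul, abs_of_pos (one_div_pos.2 hba), one_div, inv_mul_le_iff₀ hba]
  calc _ ≤ _ := abs_add_le _ _
    _ ≤ _ := add_le_add hleft hright
    _ = _ := by ring

theorem exists_continuous_eqOn_Ioo_of_abs_deriv_le {f f' : ℝ → ℝ} {a b M : ℝ}
    (hderiv : ∀ x ∈ Ioo a b, HasDerivAt f (f' x) x) (hbound : ∀ x ∈ Ioo a b, |f' x| ≤ M) :
    ∃ g : ℝ → ℝ, Continuous g ∧ EqOn f g (Ioo a b) := by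
  have hlip : LipschitzOnWith M.toNNReal f (Ioo a b) :=
    (convex_Ioo a b).lipschitzOnWith_of_nnnorm_hasDerivWithin_le
      (fun x hx => (hderiv x hx).hasDerivWithinAt)
      (fun x hx => by
        rw [← NNReal.coe_le_coe, coe_nnnorm, Real.norm_eq_abs]
        exact (hbound x hx).trans (Real.le_coe_toNNReal M))
  obtain ⟨g, hg, hfg⟩ := hlip.extend_real
  exact ⟨g, hg.continuous, hfg⟩

theorem stmt2_general (I : Set ℝ) (hI : Convex ℝ I) (f f' : ℝ → ℝ) (a b c M : ℝ)
    (ha : a ∈ I) (hb : b ∈ I) (hab : a < b) (hc : 0 < c)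
    (hdiff : ∀ y ∈ interior I, HasDerivAt f (f' y) y)
    (hint : IntervalIntegrable f' volume a b)
    (hsc : StronglyConvexOnWith a b c (fun u => |f' u|))
    (hM : ∀ u ∈ Set.Icc a b, |f' u| ≤ M) :
    |f ((a + b) / 2) - (1 / (b - a)) * ∫ u in a..b, f u| ≤
      M * (b - a) / 4 - c * (b - a) ^ 3 / 96 := by
  have hIoo : Ioo a b ⊆ interior I := by
    rw [← interior_Icc]
    exact interior_mono (hI.ordConnected.out ha hb)
  have hderiv : ∀ x ∈ Ioo a b, HasDerivAt f (f' x) x := fun x hx => hdiff x (hIoo hx)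
  obtain ⟨g, hg, hfg⟩ := exists_continuous_eqOn_Ioo_of_abs_deriv_le hderiv
    fun x hx => hM x (Ioo_subset_Icc_self hx)
  have hgderiv : ∀ x ∈ Ioo a b, HasDerivAt g (f' x) x := fun x hx =>
    (hderiv x hx).congr_of_eventuallyEq (hfg.symm.eventuallyEq_of_mem (Ioo_mem_nhds hx.1 hx.2))
  have hbound : ∀ u ∈ Icc a b, |f' u| ≤ M - c * ((b - u) * (u - a)) := fun u hu =>
    hsc.le_sub_mul hab (hM a (left_mem_Icc.2 hab.le)) (hM b (right_mem_Icc.2 hab.le)) hu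
  have hsharp := abs_midpoint_sub_average_le hab hg.continuousOn hgderiv hint hbound
  rw [integral_congr_Ioo_of_le hab.le hfg, hfg ⟨by linarith, by linarith⟩]
  have : 0 ≤ c * (b - a) ^ 3 := by positivity
  linarith

theorem stmt2 (I : Set ℝ) (hI : Convex ℝ I) (f f' : ℝ → ℝ) (a b c M : ℝ)
    (ha : a ∈ I) (hb : b ∈ I) (hab : a < b) (hc : 0 < c)
    (hdiff : ∀ y ∈ interior I, HasDerivAt f (f' y) y)
    (hint : IntervalIntegrable f' volume a b)
    (hsc : StronglyConvexOnWith a b c (fun u => |f' u|))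
    (hM : ∀ u ∈ Set.Icc a b, |f' u| ≤ M)
    (hMm : c * (b - a) ^ 2 / 24 ≤ M) :
    |f ((a + b) / 2) - (1 / (b - a)) * ∫ u in a..b, f u| ≤
      M * (b - a) / 4 - c * (b - a) ^ 3 / 96 :=
  stmt2_general I hI f f' a b c M ha hb hab hc hdiff hint hsc hM
end

section
/- Let f be differentiable on I° with f' integrable on [a,b], q ≥ 1, |f'|^q strongly convex on [a,b] with modulus c > 0, |f'| ≤ M, and M^q ≥ c(b-a)²/24. Then |f((a+b)/2) - (1/(b-a))∫_a^b f(u) du| ≤ ((b-a)/4)·(M^q - c(b-a)²/24)^{1/q}. -/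
open MeasureTheory intervalIntegral Set

/-!
Writing `m = (a + b) / 2`, the Montgomery identity expresses `(b - a) f(m) - ∫ f` as the integral
of `f'` against the kernel `u - a` on `[a, m]` and `u - b` on `[m, b]`. Strong convexity of
`|f'|^q` with `|f'| ≤ M` gives `|f'(u)|^q ≤ M^q - c (b - u)(u - a)`. Since `x ↦ x^(1/q)` is
concave, it lies below its tangent at `B = M^q - c (b - a)² / 24`, so `|f'|` is bounded by a
quadratic polynomial in `u` whose integral against the kernel is computed explicitly; the
resulting bound is `(b - a)² B^(1/q) / 4` minus a nonnegative term.
-/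

section Montgomery

variable {f f' : ℝ → ℝ} {a b m : ℝ}

lemma integral_eq_sub_of_hasDerivAt_of_mem_Ioo (hd : ∀ u ∈ Ioo a b, HasDerivAt f (f' u) u)
    (hint : IntervalIntegrable f' volume a b) {x y : ℝ} (hx : x ∈ Ioo a b)
    (hy : y ∈ Ioo a b) :
    ∫ u in x..y, f' u = f y - f x := by
  have hsub : uIcc x y ⊆ Ioo a b := ordConnected_Ioo.uIcc_subset hx hy
  exact integral_eq_sub_of_hasDerivAt (fun u hu => hd u (hsub hu))
    (hint.mono_set (hsub.trans (Ioo_subset_Icc_self.trans Icc_subset_uIcc)))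

lemma integral_eq_sub_integral_sub_mul_deriv {F F' : ℝ → ℝ} {s t : ℝ} (p : ℝ)
    (hF : ContinuousOn F (uIcc s t)) (hd : ∀ x ∈ Ioo (min s t) (max s t), HasDerivAt F (F' x) x)
    (hint : IntervalIntegrable F' volume s t) :
    ∫ x in s..t, F x = (t - p) * F t - (s - p) * F s - ∫ x in s..t, (x - p) * F' x := by
  have h := integral_mul_deriv_eq_deriv_mul_of_hasDerivAt hF (v := fun x => x - p)
    (by fun_prop) hd (fun x _ => (hasDerivAt_id x).sub_const p) hint intervalIntegrable_const
  simp only [mul_one] at h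
  rw [h]
  simp only [mul_comm]

theorem montgomery_identity_s6 (hm : m ∈ Ioo a b) (hd : ∀ u ∈ Ioo a b, HasDerivAt f (f' u) u)
    (hint : IntervalIntegrable f' volume a b) :
    (b - a) * f m - ∫ u in a..b, f u =
      (∫ u in a..m, (u - a) * f' u) - ∫ u in m..b, (b - u) * f' u := by
  have ham : a ≤ m := hm.1.le
  have hmb : m ≤ b := hm.2.le
  -- `f` need not be continuous at `a` or `b`, so integrate by parts against this primitive instead
  set F : ℝ → ℝ := fun x => ∫ u in m..x, f' u
  have hmab : m ∈ uIcc a b := Ioo_subset_Icc_self.trans Icc_subset_uIcc hm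
  have hF : ContinuousOn F (uIcc a b) := continuousOn_primitive_interval' hint hmab
  have hFf : ∀ x ∈ Ioo a b, F x = f x - f m := fun x hx =>
    integral_eq_sub_of_hasDerivAt_of_mem_Ioo hd hint hm hx
  have hFd : ∀ x ∈ Ioo a b, HasDerivAt F (f' x) x := fun x hx =>
    ((hd x hx).sub_const (f m)).congr_of_eventuallyEq
      (Filter.eventually_of_mem (isOpen_Ioo.mem_nhds hx) hFf)
  have hsub₁ : uIcc a m ⊆ uIcc a b := uIcc_subset_uIcc left_mem_uIcc hmab
  have hsub₂ : uIcc m b ⊆ uIcc a b := uIcc_subset_uIcc hmab right_mem_uIcc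
  have hFint : IntervalIntegrable F volume a b := hF.intervalIntegrable
  have hf : ∫ u in a..b, f u = (∫ u in a..b, F u) + (b - a) * f m := by
    rw [integral_of_le (ham.trans hmb), integral_Ioc_eq_integral_Ioo,
      setIntegral_congr_fun measurableSet_Ioo (g := fun u => F u + f m)
        (fun x hx => by simp only [hFf x hx, sub_add_cancel]),
      ← integral_Ioc_eq_integral_Ioo, ← integral_of_le (ham.trans hmb),
      intervalIntegral.integral_add hFint intervalIntegrable_const, intervalIntegral.integral_const,
      smul_eq_mul]
  have h₁ := integral_eq_sub_integral_sub_mul_deriv a (hF.mono hsub₁)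
    (fun x hx => by
      rw [min_eq_left ham, max_eq_right ham] at hx
      exact hFd x ⟨hx.1, hx.2.trans_le hmb⟩)
    (hint.mono_set hsub₁)
  have h₂ := integral_eq_sub_integral_sub_mul_deriv b (hF.mono hsub₂)
    (fun x hx => by
      rw [min_eq_left hmb, max_eq_right hmb] at hx
      exact hFd x ⟨hm.1.trans hx.1, hx.2⟩)
    (hint.mono_set hsub₂)
  have hneg : ∫ u in m..b, (u - b) * f' u = -∫ u in m..b, (b - u) * f' u := by
    rw [← intervalIntegral.integral_neg]
    congr 1 with u
    ring
  simp only [F, integral_same, mul_zero, sub_self, zero_mul, zero_sub] at h₁ h₂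
  rw [hf, ← integral_add_adjacent_intervals (hFint.mono_set hsub₁) (hFint.mono_set hsub₂),
    h₁, h₂, hneg]
  ring

end Montgomery

lemma StronglyConvexOnWith.le_sub_mul_of_le {a b c K : ℝ} {g : ℝ → ℝ}
    (hg : StronglyConvexOnWith a b c g) (ha : g a ≤ K) (hb : g b ≤ K) {u : ℝ}
    (hu : u ∈ Icc a b) :
    g u ≤ K - c * (b - u) * (u - a) := by
  rcases hu.1.eq_or_lt with rfl | hau
  · simpa using ha
  rcases hu.2.eq_or_lt with rfl | hub
  · simpa using hb
  have hL : 0 < b - a := by linarith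
  have ht : (b - u) / (b - a) ∈ Ioo (0 : ℝ) 1 :=
    ⟨div_pos (by linarith) hL, (div_lt_one hL).2 (by linarith)⟩
  have key := hg a ⟨le_rfl, by linarith⟩ b ⟨by linarith, le_rfl⟩ _ ht
  have hpt : (b - u) / (b - a) * a + (1 - (b - u) / (b - a)) * b = u := by field_simp; ring
  have hcoef : c * ((b - u) / (b - a)) * (1 - (b - u) / (b - a)) * (a - b) ^ 2 =
      c * (b - u) * (u - a) := by field_simp; ring
  rw [hpt, hcoef] at key
  nlinarith [ht.1, ht.2]

lemma StronglyConvexOnWith.rpow_abs_le {a b c M q : ℝ} {g : ℝ → ℝ} (hab : a ≤ b)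
    (hq : 0 ≤ q) (hg : StronglyConvexOnWith a b c (fun u => |g u| ^ q))
    (hM : ∀ u ∈ Icc a b, |g u| ≤ M) {u : ℝ} (hu : u ∈ Icc a b) :
    |g u| ^ q ≤ M ^ q - c * (b - u) * (u - a) :=
  have hMq : ∀ u ∈ Icc a b, |g u| ^ q ≤ M ^ q := fun u hu =>
    Real.rpow_le_rpow (abs_nonneg _) (hM u hu) hq
  hg.le_sub_mul_of_le (hMq a ⟨le_rfl, hab⟩) (hMq b ⟨hab, le_rfl⟩) hu

lemma Real.rpow_le_tangent {x B r : ℝ} (hx : 0 ≤ x) (hB : 0 < B) (hr₀ : 0 ≤ r)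
    (hr₁ : r ≤ 1) : x ^ r ≤ B ^ r + r * B ^ (r - 1) * (x - B) := by
  have bernoulli := rpow_one_add_le_one_add_mul_self
    (by linarith [div_nonneg hx hB.le] : -1 ≤ x / B - 1) hr₀ hr₁
  rw [add_sub_cancel, Real.div_rpow hx hB.le, div_le_iff₀ (Real.rpow_pos_of_pos hB r)]
    at bernoulli
  rw [Real.rpow_sub_one hB.ne']
  calc x ^ r ≤ (1 + r * (x / B - 1)) * B ^ r := bernoulli
    _ = B ^ r + r * (B ^ r / B) * (x - B) := by field_simp

lemma integral_mul_quadratic (h L α β : ℝ) :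
    ∫ v in (0 : ℝ)..h, v * (α + β * ((L - v) * v)) =
      α * h ^ 2 / 2 + β * (L * h ^ 3 / 3 - h ^ 4 / 4) := by
  have hpoly : ∀ v : ℝ, v * (α + β * ((L - v) * v)) = α * v + β * L * v ^ 2 - β * v ^ 3 :=
    fun v => by ring
  simp only [hpoly]
  rw [intervalIntegral.integral_sub, intervalIntegral.integral_add,
    intervalIntegral.integral_const_mul, intervalIntegral.integral_const_mul,
    intervalIntegral.integral_const_mul, integral_id, integral_pow, integral_pow]
  · ring
  all_goals exact Continuous.intervalIntegrable (by fun_prop) _ _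

lemma integral_midpoint_kernel_mul_quadratic (a b α β : ℝ) :
    (∫ u in a..(a + b) / 2, (u - a) * (α + β * ((b - u) * (u - a)))) +
      ∫ u in (a + b) / 2..b, (b - u) * (α + β * ((b - u) * (u - a))) =
      α * (b - a) ^ 2 / 4 + β * (5 * (b - a) ^ 4 / 96) := by
  have h₁ := integral_comp_sub_right (a := a) (b := (a + b) / 2)
    (fun v => v * (α + β * ((b - a - v) * v))) a
  have h₂ := integral_comp_sub_left (a := (a + b) / 2) (b := b)
    (fun v => v * (α + β * ((b - a - v) * v))) b
  simp only [sub_sub_sub_cancel_right, sub_self] at h₁ h₂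
  rw [h₁, integral_congr (a := (a + b) / 2) (b := b)
    (g := fun u => (b - u) * (α + β * ((b - a - (b - u)) * (b - u)))) fun u _ => by ring, h₂,
    integral_mul_quadratic, integral_mul_quadratic]
  ring

lemma abs_integral_mul_le_integral_mul {w g ψ : ℝ → ℝ} {s t : ℝ} (hst : s ≤ t)
    (hw : Continuous w) (hψ : Continuous ψ) (hg : IntervalIntegrable g volume s t)
    (hw₀ : ∀ x ∈ Icc s t, 0 ≤ w x)
    (hgψ : ∀ x ∈ Icc s t, |g x| ≤ ψ x) :
    |∫ x in s..t, w x * g x| ≤ ∫ x in s..t, w x * ψ x := by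
  refine (abs_integral_le_integral_abs hst).trans (integral_mono_on hst ?_ ?_ fun x hx => ?_)
  · exact (hg.continuousOn_mul hw.continuousOn).abs
  · exact (hw.mul hψ).intervalIntegrable s t
  · rw [abs_mul, abs_of_nonneg (hw₀ x hx)]
    exact mul_le_mul_of_nonneg_left (hgψ x hx) (hw₀ x hx)

lemma le_tangent_of_rpow_le {y X B q : ℝ} (hy : 0 ≤ y) (hq : 1 ≤ q) (hB : 0 < B)
    (h : y ^ q ≤ X) : y ≤ B ^ (1 / q) + 1 / q * B ^ (1 / q - 1) * (X - B) := by
  have hq₀ : 0 < q := zero_lt_one.trans_le hq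
  have hX : 0 ≤ X := (Real.rpow_nonneg hy q).trans h
  calc y = (y ^ q) ^ (1 / q) := by rw [one_div, Real.rpow_rpow_inv hy hq₀.ne']
    _ ≤ X ^ (1 / q) := Real.rpow_le_rpow (Real.rpow_nonneg hy q) h (by positivity)
    _ ≤ _ := Real.rpow_le_tangent hX hB (by positivity) ((div_le_one hq₀).2 hq)

theorem abs_sub_integral_le_of_abs_deriv_le_quadratic {f f' : ℝ → ℝ} {a b α β : ℝ}
    (hab : a < b) (hd : ∀ u ∈ Ioo a b, HasDerivAt f (f' u) u)
    (hint : IntervalIntegrable f' volume a b)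
    (hf' : ∀ u ∈ Icc a b, |f' u| ≤ α + β * ((b - u) * (u - a))) :
    |f ((a + b) / 2) - 1 / (b - a) * ∫ u in a..b, f u| ≤
      α * (b - a) / 4 + β * (5 * (b - a) ^ 3 / 96) := by
  have hL : 0 < b - a := sub_pos.2 hab
  have hnorm : f ((a + b) / 2) - 1 / (b - a) * ∫ u in a..b, f u =
      ((b - a) * f ((a + b) / 2) - ∫ u in a..b, f u) / (b - a) := by
    field_simp
  have hrhs : α * (b - a) / 4 + β * (5 * (b - a) ^ 3 / 96) =
      (α * (b - a) ^ 2 / 4 + β * (5 * (b - a) ^ 4 / 96)) / (b - a) := by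
    field_simp
  rw [hnorm, hrhs, abs_div, abs_of_pos hL]
  refine div_le_div_of_nonneg_right ?_ hL.le
  have hm : (a + b) / 2 ∈ Ioo a b := ⟨by linarith, by linarith⟩
  have hmab : (a + b) / 2 ∈ uIcc a b := Ioo_subset_Icc_self.trans Icc_subset_uIcc hm
  rw [montgomery_identity_s6 hm hd hint, ← integral_midpoint_kernel_mul_quadratic]
  refine (abs_sub _ _).trans (add_le_add ?_ ?_)
  · exact abs_integral_mul_le_integral_mul hm.1.le (by fun_prop) (by fun_prop)
      (hint.mono_set (uIcc_subset_uIcc left_mem_uIcc hmab)) (fun u hu => sub_nonneg.2 hu.1)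
      (fun u hu => hf' u ⟨hu.1, hu.2.trans hm.2.le⟩)
  · exact abs_integral_mul_le_integral_mul hm.2.le (by fun_prop) (by fun_prop)
      (hint.mono_set (uIcc_subset_uIcc hmab right_mem_uIcc)) (fun u hu => sub_nonneg.2 hu.2)
      (fun u hu => hf' u ⟨hm.1.le.trans hu.1, hu.2⟩)

theorem stmt6_general (I : Set ℝ) (hI : Convex ℝ I) (f f' : ℝ → ℝ) (a b c M q : ℝ)
    (ha : a ∈ I) (hb : b ∈ I) (hab : a < b) (hc : 0 < c) (hq : 1 ≤ q)
    (hdiff : ∀ y ∈ interior I, HasDerivAt f (f' y) y)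
    (hint : IntervalIntegrable f' volume a b)
    (hsc : StronglyConvexOnWith a b c (fun u => |f' u| ^ q))
    (hM : ∀ u ∈ Set.Icc a b, |f' u| ≤ M) :
    |f ((a + b) / 2) - (1 / (b - a)) * ∫ u in a..b, f u| ≤
      ((b - a) / 4) * (M ^ q - c * (b - a) ^ 2 / 24) ^ (1 / q) := by
  have hL : 0 < b - a := sub_pos.2 hab
  have hd : ∀ u ∈ Ioo a b, HasDerivAt f (f' u) u := fun u hu =>
    hdiff u (interior_mono (hI.ordConnected.out ha hb) (by rwa [interior_Icc]))
  have hφ : ∀ u ∈ Icc a b, |f' u| ^ q ≤ M ^ q - c * (b - u) * (u - a) := fun u hu =>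
    hsc.rpow_abs_le hab.le (by linarith) hM hu
  -- at the midpoint `hφ` reads `0 ≤ M ^ q - c (b - a)² / 4`
  have hB : 0 < M ^ q - c * (b - a) ^ 2 / 24 := by
    have := (Real.rpow_nonneg (abs_nonneg _) q).trans
      (hφ ((a + b) / 2) ⟨by linarith, by linarith⟩)
    nlinarith [mul_pos hc (pow_pos hL 2)]
  set B := M ^ q - c * (b - a) ^ 2 / 24
  set C := 1 / q * B ^ (1 / q - 1)
  have hCc : 0 ≤ C * c * (b - a) ^ 3 := by positivity
  refine (abs_sub_integral_le_of_abs_deriv_le_quadratic (α := B ^ (1 / q) + C * (M ^ q - B))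
    (β := -(C * c)) hab hd hint fun u hu => ?_).trans ?_
  · have := le_tangent_of_rpow_le (abs_nonneg _) hq hB (hφ u hu)
    linarith
  · simp only [B]
    linarith

theorem stmt6 (I : Set ℝ) (hI : Convex ℝ I) (f f' : ℝ → ℝ) (a b c M q : ℝ)
    (ha : a ∈ I) (hb : b ∈ I) (hab : a < b) (hc : 0 < c) (hq : 1 ≤ q)
    (hdiff : ∀ y ∈ interior I, HasDerivAt f (f' y) y)
    (hint : IntervalIntegrable f' volume a b)
    (hsc : StronglyConvexOnWith a b c (fun u => |f' u| ^ q))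
    (hM : ∀ u ∈ Set.Icc a b, |f' u| ≤ M)
    (hMm : c * (b - a) ^ 2 / 24 ≤ M ^ q) :
    |f ((a + b) / 2) - (1 / (b - a)) * ∫ u in a..b, f u| ≤
      ((b - a) / 4) * (M ^ q - c * (b - a) ^ 2 / 24) ^ (1 / q) :=
  stmt6_general I hI f f' a b c M q ha hb hab hc hq hdiff hint hsc hM
end

section
/- Let f : [a,b] → [0,∞) be convex and g : [a,b] → [0,∞) be strongly convex with modulus c > 0, with fg integrable on [a,b], a < b. Then (1/(b-a))∫_a^b f(x)g(x) dx + (c(b-a)²/6)·(f(a)+f(b))/2 ≤ (1/3)[f(a)g(a) + f(b)g(b)] + (1/6)[f(a)g(b) + f(b)g(a)]. -/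
/-! On `[a, b]` write `x = t b + (1 - t) a`. Convexity puts `f x` below its chord
`t f(b) + (1 - t) f(a)`, strong convexity puts `g x` below its chord minus
`c t (1 - t) (b - a)²`, and since `f, g ≥ 0` the two bounds multiply. Averaging over `[a, b]`
is integrating over `t ∈ [0, 1]`, where the product of the bounds is a cubic in `t`
integrating exactly to the right-hand side minus `c (b - a)² (f a + f b) / 12`. -/

open MeasureTheory intervalIntegral Set

theorem integral_comp_sub_div_sub {a b : ℝ} (hab : a ≠ b) (F : ℝ → ℝ) :
    ∫ x in a..b, F ((x - a) / (b - a)) = (b - a) * ∫ t in (0:ℝ)..1, F t := by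
  have hba : b - a ≠ 0 := sub_ne_zero.2 hab.symm
  simpa [sub_div, div_self hba, ← sub_div] using
    integral_comp_div_sub (a := a) (b := b) (fun t => F t) hba (a / (b - a))

theorem integral_unit_chord_mul_chord_sub (A B P Q k : ℝ) :
    ∫ t in (0:ℝ)..1, (t * B + (1 - t) * A) * (t * Q + (1 - t) * P - k * t * (1 - t)) =
      (A * P + B * Q) / 3 + (A * Q + B * P) / 6 - k * (A + B) / 12 := by
  have hexpand : (fun t : ℝ => (t * B + (1 - t) * A) * (t * Q + (1 - t) * P - k * t * (1 - t))) =
      fun t => A * P + (A * (Q - P - k) + (B - A) * P) * t ^ 1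
        + (A * k + (B - A) * (Q - P - k)) * t ^ 2 + (B - A) * k * t ^ 3 := by
    funext t; ring
  have hint : ∀ {p : ℝ → ℝ}, Continuous p → IntervalIntegrable p volume 0 1 :=
    fun hp => hp.intervalIntegrable _ _
  rw [hexpand, integral_add (hint (by fun_prop)) (hint (by fun_prop)),
    integral_add (hint (by fun_prop)) (hint (by fun_prop)),
    integral_add (hint (by fun_prop)) (hint (by fun_prop))]
  simp only [intervalIntegral.integral_const_mul, integral_pow, intervalIntegral.integral_const]
  norm_num
  ring

namespace StronglyConvexOnWith

variable {a b c : ℝ} {g : ℝ → ℝ}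

theorem le_of_mem_Icc (hg : StronglyConvexOnWith a b c g) {x y : ℝ} (hx : x ∈ Icc a b)
    (hy : y ∈ Icc a b) {t : ℝ} (ht : t ∈ Icc (0:ℝ) 1) :
    g (t * x + (1 - t) * y) ≤ t * g x + (1 - t) * g y - c * t * (1 - t) * (x - y) ^ 2 := by
  rcases ht.1.eq_or_lt with rfl | h0
  · simp
  rcases ht.2.eq_or_lt with rfl | h1
  · simp
  exact hg x hx y hy t ⟨h0, h1⟩

theorem mul_le_of_convexOn {f : ℝ → ℝ} (hab : a ≤ b) (hf0 : ∀ u ∈ Icc a b, 0 ≤ f u)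
    (hg0 : ∀ u ∈ Icc a b, 0 ≤ g u) (hf : ConvexOn ℝ (Icc a b) f)
    (hg : StronglyConvexOnWith a b c g) {t : ℝ} (ht : t ∈ Icc (0:ℝ) 1) :
    f (t * b + (1 - t) * a) * g (t * b + (1 - t) * a) ≤
      (t * f b + (1 - t) * f a) * (t * g b + (1 - t) * g a - c * (b - a) ^ 2 * t * (1 - t)) := by
  have ha : a ∈ Icc a b := left_mem_Icc.2 hab
  have hb : b ∈ Icc a b := right_mem_Icc.2 hab
  have hx : t * b + (1 - t) * a ∈ Icc a b :=
    convex_Icc a b hb ha ht.1 (sub_nonneg.2 ht.2) (add_sub_cancel t 1)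
  have hfx : f (t * b + (1 - t) * a) ≤ t * f b + (1 - t) * f a :=
    hf.2 hb ha ht.1 (sub_nonneg.2 ht.2) (add_sub_cancel t 1)
  have hgx : g (t * b + (1 - t) * a) ≤ t * g b + (1 - t) * g a - c * (b - a) ^ 2 * t * (1 - t) := by
    linarith [hg.le_of_mem_Icc hb ha ht]
  exact mul_le_mul hfx hgx (hg0 _ hx) ((hf0 _ hx).trans hfx)

end StronglyConvexOnWith

theorem stmt10_general (f g : ℝ → ℝ) (a b c : ℝ) (hab : a < b)
    (hf0 : ∀ u ∈ Set.Icc a b, 0 ≤ f u) (hg0 : ∀ u ∈ Set.Icc a b, 0 ≤ g u)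
    (hf : ConvexOn ℝ (Set.Icc a b) f) (hg : StronglyConvexOnWith a b c g)
    (hint : IntervalIntegrable (fun x => f x * g x) volume a b) :
    (1 / (b - a)) * ∫ x in a..b, f x * g x + (c * (b - a) ^ 2 / 6) * ((f a + f b) / 2) ≤
      (1 / 3) * (f a * g a + f b * g b) + (1 / 6) * (f a * g b + f b * g a) := by
  have hba : 0 < b - a := sub_pos.2 hab
  set q : ℝ → ℝ := fun t =>
    (t * f b + (1 - t) * f a) * (t * g b + (1 - t) * g a - c * (b - a) ^ 2 * t * (1 - t))
  have hbound : ∀ x ∈ Icc a b, f x * g x ≤ q ((x - a) / (b - a)) := by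
    intro x hx
    have ht : (x - a) / (b - a) ∈ Icc (0:ℝ) 1 :=
      ⟨div_nonneg (sub_nonneg.2 hx.1) hba.le, (div_le_one hba).2 (by linarith [hx.2])⟩
    have hpoint : (x - a) / (b - a) * b + (1 - (x - a) / (b - a)) * a = x := by
      field_simp; ring
    simpa only [hpoint] using hg.mul_le_of_convexOn hab.le hf0 hg0 hf ht
  have hmono : ∫ x in a..b, f x * g x ≤ (b - a) * ∫ t in (0:ℝ)..1, q t := by
    rw [← integral_comp_sub_div_sub hab.ne]
    exact integral_mono_on hab.le hint (Continuous.intervalIntegrable (by fun_prop) _ _) hbound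
  rw [integral_unit_chord_mul_chord_sub, ← div_le_iff₀' hba] at hmono
  -- the `∫` binder extends over the constant term, so the integrand is `f x * g x + K`
  rw [integral_add hint intervalIntegrable_const, intervalIntegral.integral_const, smul_eq_mul,
    one_div, mul_add, inv_mul_cancel_left₀ hba.ne', inv_mul_eq_div]
  linarith

theorem stmt10 (f g : ℝ → ℝ) (a b c : ℝ) (hab : a < b) (hc : 0 < c)
    (hf0 : ∀ u ∈ Set.Icc a b, 0 ≤ f u) (hg0 : ∀ u ∈ Set.Icc a b, 0 ≤ g u)
    (hf : ConvexOn ℝ (Set.Icc a b) f) (hg : StronglyConvexOnWith a b c g)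
    (hint : IntervalIntegrable (fun x => f x * g x) volume a b) :
    (1 / (b - a)) * ∫ x in a..b, f x * g x + (c * (b - a) ^ 2 / 6) * ((f a + f b) / 2) ≤
      (1 / 3) * (f a * g a + f b * g b) + (1 / 6) * (f a * g b + f b * g a) :=
  stmt10_general f g a b c hab hf0 hg0 hf hg hint
end
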